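/- arXiv:2311.03147 — 4 statements merged into one kernel-verified Lean document; each statement's English description precedes it below -/
import Mathlib

section
/- Let G be a finite connected simple graph of order n > 2 that has at least one edge. Then n/(n − ldim(G) + 1) ≤ ldim_f(G) ≤ n/ℓ(G), where ℓ(G) = min{|R{u,v}| : uv an edge of G}. -/
open Finset

/-- A local resolving function of a graph `G`: a map `ζ : V → [0,1]` such that for every
pair of adjacent vertices `u v`, the sum of `ζ` over the local resolving neighborhood
`R{u,v} = {w : d(w,u) ≠ d(w,v)}` is at least `1`. -/
def IsLocalResolvingFunction {V : Type*} [Fintype V] (G : SimpleGraph V) (ζ : V → ℝ) : Prop :=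
  (∀ w, ζ w ∈ Set.Icc (0 : ℝ) 1) ∧
    ∀ u v, G.Adj u v →
      1 ≤ ∑ w ∈ Finset.univ.filter (fun w => G.dist w u ≠ G.dist w v), ζ w

/-- The local fractional metric dimension of `G`: the minimum of `∑ v, ζ v` over all
local resolving functions `ζ` of `G`. -/
noncomputable def ldimf {V : Type*} [Fintype V] (G : SimpleGraph V) : ℝ :=
  sInf {s : ℝ | ∃ ζ : V → ℝ, IsLocalResolvingFunction G ζ ∧ s = ∑ v, ζ v}

/-- The local metric dimension of `G`: the minimum cardinality of a set `W` of vertices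
such that every pair of adjacent vertices is resolved by some vertex of `W`. -/
noncomputable def ldim {V : Type*} [Fintype V] (G : SimpleGraph V) : ℕ :=
  sInf {k : ℕ | ∃ W : Finset V, W.card = k ∧
    ∀ u v, G.Adj u v → ∃ w ∈ W, G.dist w u ≠ G.dist w v}

/-- For every `j`, there is a subset `U` of `n - j` vertices whose `ζ`-sum is at least
`(n-j)/n` times the total sum (pick away minima one at a time). -/
lemma exists_large_subset {V : Type*} [Fintype V] [DecidableEq V] (ζ : V → ℝ)
    (hn : 0 < Fintype.card V) :
    ∀ j : ℕ, j ≤ Fintype.card V → ∃ U : Finset V,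
      U.card = Fintype.card V - j ∧
      ((Fintype.card V - j : ℕ) : ℝ) / (Fintype.card V : ℝ) * (∑ v, ζ v) ≤ ∑ v ∈ U, ζ v := by
  intro j
  induction j with
  | zero =>
    intro _
    refine ⟨Finset.univ, by simp, ?_⟩
    rw [Nat.sub_zero]
    rw [div_self (by positivity : ((Fintype.card V : ℕ) : ℝ) ≠ 0), one_mul]
  | succ j ih =>
    intro hj
    obtain ⟨U, hUcard, hUsum⟩ := ih (by omega)
    have hcpos : 0 < U.card := by omega
    have hUne : U.Nonempty := Finset.card_pos.mp hcpos
    obtain ⟨v, hvU, hvmin⟩ := Finset.exists_min_image U ζ hUne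
    have hmin : (U.card : ℝ) * ζ v ≤ ∑ w ∈ U, ζ w := by
      have := Finset.card_nsmul_le_sum U ζ (ζ v) (fun x hx => hvmin x hx)
      simpa [nsmul_eq_mul] using this
    refine ⟨U.erase v, ?_, ?_⟩
    · rw [Finset.card_erase_of_mem hvU, hUcard]; omega
    · have herase : ∑ w ∈ U.erase v, ζ w = (∑ w ∈ U, ζ w) - ζ v :=
        Finset.sum_erase_eq_sub hvU
      rw [herase]
      set N : ℝ := (Fintype.card V : ℝ) with hN
      set C : ℝ := ((Fintype.card V - j : ℕ) : ℝ) with hC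
      have hC1 : (1 : ℝ) ≤ C := by
        rw [hC]; exact_mod_cast (by omega : 1 ≤ Fintype.card V - j)
      have hNpos : (0 : ℝ) < N := by rw [hN]; exact_mod_cast hn
      have hcast : ((Fintype.card V - (j + 1) : ℕ) : ℝ) = C - 1 := by
        rw [hC]
        have : Fintype.card V - (j + 1) = (Fintype.card V - j) - 1 := by omega
        rw [this]
        push_cast [Nat.cast_sub (by omega : 1 ≤ Fintype.card V - j)]
        ring
      rw [hcast]
      have hmin' : C * ζ v ≤ ∑ w ∈ U, ζ w := by
        rw [hC, ← hUcard]; exact_mod_cast hmin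
      have hUsum' : C / N * (∑ w, ζ w) ≤ ∑ w ∈ U, ζ w := hUsum
      set s : ℝ := ∑ w, ζ w
      set SU : ℝ := ∑ w ∈ U, ζ w
      rw [div_mul_eq_mul_div, div_le_iff₀ hNpos]
      have h1 : C * s ≤ N * SU := by
        rw [div_mul_eq_mul_div, div_le_iff₀ hNpos] at hUsum'
        linarith [hUsum']
      have hCpos : (0 : ℝ) < C := by linarith
      have h3 : C * s * (C - 1) ≤ N * SU * (C - 1) :=
        mul_le_mul_of_nonneg_right h1 (by linarith)
      have h4 : N * (C * ζ v) ≤ N * SU :=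
        mul_le_mul_of_nonneg_left hmin' (le_of_lt hNpos)
      have key : C * ((C - 1) * s) ≤ C * ((SU - ζ v) * N) := by nlinarith
      exact le_of_mul_le_mul_left key hCpos

/-- If `G` is a finite connected simple graph of order `n > 2` with at least one edge,
then `n / (n - ldim(G) + 1) ≤ ldimf(G) ≤ n / ℓ(G)`, where
`ℓ(G)` is the minimum cardinality of a local resolving neighborhood of an edge of `G`. -/
theorem ldimf_bounds {V : Type*} [Fintype V] (G : SimpleGraph V)
    (hconn : G.Connected) (hcard : 2 < Fintype.card V) (hedge : ∃ u v, G.Adj u v) :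
    (Fintype.card V : ℝ) / ((Fintype.card V : ℝ) - (ldim G : ℝ) + 1) ≤ ldimf G ∧
      ldimf G ≤ (Fintype.card V : ℝ) /
        ((sInf {k : ℕ | ∃ u v, G.Adj u v ∧
          k = (Finset.univ.filter (fun w => G.dist w u ≠ G.dist w v)).card} : ℕ) : ℝ) := by
  classical
  obtain ⟨u0, v0, huv0⟩ := hedge
  have hn0 : 0 < Fintype.card V := by omega
  -- u belongs to R{u,v}
  have hmemR : ∀ u v : V, G.Adj u v →
      u ∈ Finset.univ.filter (fun w => G.dist w u ≠ G.dist w v) := by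
    intro u v h
    simp only [Finset.mem_filter, Finset.mem_univ, true_and]
    simp only [SimpleGraph.dist_self]
    exact fun hz => h.ne ((hconn.dist_eq_zero_iff).mp hz.symm)
  set S : Set ℝ := {s : ℝ | ∃ ζ : V → ℝ, IsLocalResolvingFunction G ζ ∧ s = ∑ v, ζ v} with hS
  -- S is nonempty (constant 1 function)
  have hSne : S.Nonempty := by
    refine ⟨∑ v : V, (1 : ℝ), fun _ => 1, ⟨fun w => by norm_num, ?_⟩, rfl⟩
    intro u v huv
    rw [Finset.sum_const, nsmul_eq_mul, mul_one]
    exact_mod_cast Nat.one_le_iff_ne_zero.mpr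
      (Finset.card_ne_zero_of_mem (hmemR u v huv))
  -- S is bounded below by 0
  have hSbdd : BddBelow S := by
    refine ⟨0, fun s hs => ?_⟩
    obtain ⟨ζ, ⟨hIcc, _⟩, rfl⟩ := hs
    exact Finset.sum_nonneg fun w _ => (hIcc w).1
  constructor
  · -- lower bound
    rw [ldimf, ← hS]
    apply le_csInf hSne
    rintro b ⟨ζ, ⟨hIcc, hres⟩, rfl⟩
    set s : ℝ := ∑ v, ζ v with hs
    have hs1 : (1 : ℝ) ≤ s := by
      refine le_trans (hres u0 v0 huv0) ?_
      exact Finset.sum_le_sum_of_subset_of_nonneg (Finset.filter_subset _ _)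
        (fun i _ _ => (hIcc i).1)
    have hspos : (0 : ℝ) < s := by linarith
    set m : ℕ := ⌈(Fintype.card V : ℝ) / s⌉₊ with hm
    have hm1 : 1 ≤ m := by
      rw [hm]
      exact Nat.one_le_ceil_iff.mpr (div_pos (by exact_mod_cast hn0) hspos)
    have hmn : m ≤ Fintype.card V := by
      rw [hm]
      exact Nat.ceil_le.mpr (div_le_self (by positivity) hs1)
    obtain ⟨U, hUcard, hUsum⟩ := exists_large_subset ζ hn0 (m - 1) (by omega)
    -- U is a local resolving set
    have hres' : ∀ u v, G.Adj u v → ∃ w ∈ U, G.dist w u ≠ G.dist w v := by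
      intro u v huv
      by_contra hno
      push_neg at hno
      have hsub : Finset.univ.filter (fun w => G.dist w u ≠ G.dist w v) ⊆
          Finset.univ \ U := by
        intro w hw
        simp only [Finset.mem_filter, Finset.mem_univ, true_and] at hw
        simp only [Finset.mem_sdiff, Finset.mem_univ, true_and]
        exact fun hwU => hw (hno w hwU)
      have h1 : (1 : ℝ) ≤ ∑ w ∈ Finset.univ \ U, ζ w :=
        le_trans (hres u v huv)
          (Finset.sum_le_sum_of_subset_of_nonneg hsub (fun i _ _ => (hIcc i).1))
      have hsd : ∑ w ∈ Finset.univ \ U, ζ w = s - ∑ w ∈ U, ζ w := by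
        rw [Finset.sum_sdiff_eq_sub (Finset.subset_univ U), hs]
      rw [hsd] at h1
      -- so sum over U ≤ s - 1, but sum over U ≥ ((n-(m-1))/n) * s
      have hcast1 : ((Fintype.card V - (m - 1) : ℕ) : ℝ) =
          (Fintype.card V : ℝ) - ((m - 1 : ℕ) : ℝ) := by
        exact_mod_cast Nat.cast_sub (by omega : m - 1 ≤ Fintype.card V)
      have hlt : ((m - 1 : ℕ) : ℝ) < (Fintype.card V : ℝ) / s := by
        rw [← Nat.lt_ceil, ← hm]; omega
      have hNpos : (0 : ℝ) < (Fintype.card V : ℝ) := by exact_mod_cast hn0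
      have hU2 : ((Fintype.card V : ℝ) - ((m - 1 : ℕ) : ℝ)) / (Fintype.card V : ℝ) * s
          ≤ ∑ w ∈ U, ζ w := by rw [← hcast1]; exact hUsum
      -- derive contradiction
      have hkey : ((m - 1 : ℕ) : ℝ) * s < (Fintype.card V : ℝ) := by
        calc ((m - 1 : ℕ) : ℝ) * s < ((Fintype.card V : ℝ) / s) * s :=
              mul_lt_mul_of_pos_right hlt hspos
          _ = (Fintype.card V : ℝ) := div_mul_cancel₀ _ (ne_of_gt hspos)
      rw [div_mul_eq_mul_div, div_le_iff₀ hNpos] at hU2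
      nlinarith [hU2, hkey, h1, mul_le_mul_of_nonneg_right h1 (le_of_lt hNpos)]
    have hldim : ldim G ≤ U.card := Nat.sInf_le ⟨U, rfl, hres'⟩
    have hldim' : ldim G ≤ Fintype.card V - (m - 1) := hUcard ▸ hldim
    -- conclude in ℝ
    have hkR : (ldim G : ℝ) ≤ (Fintype.card V : ℝ) - ((m - 1 : ℕ) : ℝ) := by
      have := Nat.cast_le (α := ℝ) |>.mpr hldim'
      rwa [Nat.cast_sub (by omega : m - 1 ≤ Fintype.card V)] at this
    have hm1R : ((m - 1 : ℕ) : ℝ) = (m : ℝ) - 1 := by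
      rw [Nat.cast_sub hm1]; norm_num
    have hceil : (Fintype.card V : ℝ) / s ≤ (m : ℝ) := Nat.le_ceil _
    have hD : (Fintype.card V : ℝ) / s ≤ (Fintype.card V : ℝ) - (ldim G : ℝ) + 1 := by
      rw [hm1R] at hkR; linarith
    have hDpos : (0 : ℝ) < (Fintype.card V : ℝ) - (ldim G : ℝ) + 1 := by
      have : (1 : ℝ) ≤ (m : ℝ) := by exact_mod_cast hm1
      rw [hm1R] at hkR; linarith
    rw [div_le_iff₀ hspos] at hD
    rw [div_le_iff₀ hDpos]
    linarith
  · -- upper bound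
    set K : Set ℕ := {k : ℕ | ∃ u v, G.Adj u v ∧
        k = (Finset.univ.filter (fun w => G.dist w u ≠ G.dist w v)).card} with hK
    have hKne : K.Nonempty := ⟨_, u0, v0, huv0, rfl⟩
    set ℓ : ℕ := sInf K with hℓ
    obtain ⟨u1, v1, huv1, hℓeq⟩ := Nat.sInf_mem hKne
    have hℓ1 : 1 ≤ ℓ := by
      rw [hℓ, hℓeq]
      exact Nat.one_le_iff_ne_zero.mpr (Finset.card_ne_zero_of_mem (hmemR u1 v1 huv1))
    have hℓpos : (0 : ℝ) < (ℓ : ℝ) := by exact_mod_cast hℓ1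
    have hmem : (Fintype.card V : ℝ) / (ℓ : ℝ) ∈ S := by
      refine ⟨fun _ => 1 / (ℓ : ℝ), ⟨fun w => ⟨by positivity, ?_⟩, ?_⟩, ?_⟩
      · rw [div_le_one hℓpos]; exact_mod_cast hℓ1
      · intro u v huv
        rw [Finset.sum_const, nsmul_eq_mul]
        have hle : ℓ ≤ (Finset.univ.filter (fun w => G.dist w u ≠ G.dist w v)).card :=
          Nat.sInf_le ⟨u, v, huv, rfl⟩
        rw [mul_one_div, le_div_iff₀ hℓpos, one_mul]
        exact_mod_cast hle
      · rw [Finset.sum_const, Finset.card_univ, nsmul_eq_mul, mul_one_div]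
    rw [ldimf, ← hS]
    exact csInf_le hSbdd hmem
end

section
/- Let G be a finite connected simple graph of order n > 2. Then ldim_f(G) = 1 if and only if G is bipartite. -/
open Finset

/-!
If `d(x,u) = d(x,v)` for an edge `uv`, shortest paths from `x` to `u` and to `v` close up with
`uv` into an odd closed walk. So in a bipartite graph every vertex resolves every edge, the
uniform weight `1/n` is a local resolving function, and `ldim_f(G) = 1`. Conversely, if a vertex
`x` resolved every edge, the parity of `d(x, ·)` would be a proper `2`-coloring; so in a
non-bipartite graph each `x` misses some edge, whence `ζ x ≤ ∑ ζ - 1`, and summing over `x`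
gives `∑ ζ ≥ n/(n-1) > 1`.
-/

namespace SimpleGraph

variable {V : Type*} {G : SimpleGraph V}

lemma Reachable.dist_ne_of_adj_of_colorable_two (h2 : G.Colorable 2) {w u v : V}
    (hwu : G.Reachable w u) (huv : G.Adj u v) : G.dist w u ≠ G.dist w v := by
  intro hd
  obtain ⟨p, hp⟩ := hwu.exists_walk_length_eq_dist
  obtain ⟨q, hq⟩ := (hwu.trans huv.reachable).exists_walk_length_eq_dist
  have heven := two_colorable_iff_forall_loop_even.mp h2 w ((p.concat huv).append q.reverse)
  rw [Walk.length_append, Walk.length_concat, Walk.length_reverse, hp, hq, ← hd] at heven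
  exact Nat.not_even_iff_odd.mpr ⟨G.dist w u, by ring⟩ heven

lemma Connected.exists_adj_dist_eq_of_not_colorable_two (hconn : G.Connected)
    (h2 : ¬ G.Colorable 2) (x : V) : ∃ u v, G.Adj u v ∧ G.dist x u = G.dist x v := by
  by_contra! hres
  refine h2 ⟨Coloring.mk (fun v => ⟨G.dist x v % 2, Nat.mod_lt _ two_pos⟩)
    fun {u v} huv hcol => ?_⟩
  have hmod : G.dist x u % 2 = G.dist x v % 2 := congrArg Fin.val hcol
  have hu : G.dist u v = 1 := dist_eq_one_iff_adj.mpr huv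
  have hv : G.dist v u = 1 := dist_eq_one_iff_adj.mpr huv.symm
  have := hres u v huv
  have : G.dist x u ≤ G.dist x v + G.dist v u := hconn.dist_triangle
  have : G.dist x v ≤ G.dist x u + G.dist u v := hconn.dist_triangle
  omega

end SimpleGraph

section LocalFractionalMetricDimension

variable {V : Type*} [Fintype V] {G : SimpleGraph V}

namespace IsLocalResolvingFunction

variable {ζ : V → ℝ} (hζ : IsLocalResolvingFunction G ζ)
include hζ

lemma one_le_sum_of_subset {u v : V} (huv : G.Adj u v) {s : Finset V}
    (hs : univ.filter (fun w => G.dist w u ≠ G.dist w v) ⊆ s) : 1 ≤ ∑ w ∈ s, ζ w :=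
  (hζ.2 u v huv).trans (sum_le_sum_of_subset_of_nonneg hs fun w _ _ => (hζ.1 w).1)

lemma one_le_sum {u v : V} (huv : G.Adj u v) : 1 ≤ ∑ w, ζ w :=
  hζ.one_le_sum_of_subset huv (subset_univ _)

lemma le_sum_sub_one {u v x : V} (huv : G.Adj u v) (hx : G.dist x u = G.dist x v) :
    ζ x ≤ ∑ w, ζ w - 1 := by
  classical
  have hle : 1 ≤ ∑ w ∈ univ.erase x, ζ w :=
    hζ.one_le_sum_of_subset huv fun w hw =>
      mem_erase.mpr ⟨fun hwx => (mem_filter.mp hw).2 (hwx ▸ hx), mem_univ w⟩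
  rw [sum_erase_eq_sub (mem_univ x)] at hle
  linarith

end IsLocalResolvingFunction

lemma isLocalResolvingFunction_one : IsLocalResolvingFunction G 1 := by
  refine ⟨fun _ => ⟨zero_le_one, le_rfl⟩, fun u v huv => ?_⟩
  have hu : u ∈ univ.filter (fun w => G.dist w u ≠ G.dist w v) := by
    simp [SimpleGraph.dist_eq_one_iff_adj.mpr huv]
  simpa using card_pos.mpr ⟨u, hu⟩

lemma le_ldimf {c : ℝ} (h : ∀ ζ, IsLocalResolvingFunction G ζ → c ≤ ∑ v, ζ v) :
    c ≤ ldimf G :=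
  le_csInf ⟨_, 1, isLocalResolvingFunction_one, rfl⟩ fun _ ⟨ζ, hζ, hs⟩ => hs ▸ h ζ hζ

lemma ldimf_le {ζ : V → ℝ} (hζ : IsLocalResolvingFunction G ζ) : ldimf G ≤ ∑ v, ζ v :=
  csInf_le ⟨0, fun _ ⟨_, hη, hs⟩ => hs ▸ sum_nonneg fun v _ => (hη.1 v).1⟩
    ⟨ζ, hζ, rfl⟩

lemma sum_const_inv_card [Nonempty V] : ∑ _ : V, (Fintype.card V : ℝ)⁻¹ = 1 := by
  simp

lemma isLocalResolvingFunction_const_inv_card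
    (h : ∀ u v, G.Adj u v → ∀ w, G.dist w u ≠ G.dist w v) :
    IsLocalResolvingFunction G fun _ => (Fintype.card V : ℝ)⁻¹ := by
  refine ⟨fun _ => ⟨by positivity, Nat.cast_inv_le_one _⟩, fun u v huv => ?_⟩
  have : Nonempty V := ⟨u⟩
  rw [filter_true_of_mem fun w _ => h u v huv w, sum_const_inv_card]

lemma ldimf_eq_one_of_forall_dist_ne {u v : V} (huv : G.Adj u v)
    (h : ∀ a b, G.Adj a b → ∀ w, G.dist w a ≠ G.dist w b) : ldimf G = 1 := by
  have : Nonempty V := ⟨u⟩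
  refine le_antisymm ?_ (le_ldimf fun ζ hζ => hζ.one_le_sum huv)
  calc ldimf G ≤ ∑ _ : V, (Fintype.card V : ℝ)⁻¹ :=
        ldimf_le (isLocalResolvingFunction_const_inv_card h)
    _ = 1 := sum_const_inv_card

lemma card_div_card_sub_one_le_ldimf (hV : 1 < Fintype.card V)
    (h : ∀ x, ∃ u v, G.Adj u v ∧ G.dist x u = G.dist x v) :
    (Fintype.card V : ℝ) / (Fintype.card V - 1) ≤ ldimf G := by
  have hV' : (1 : ℝ) < Fintype.card V := by exact_mod_cast hV
  refine le_ldimf fun ζ hζ => ?_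
  have hsum : ∑ w, ζ w ≤ Fintype.card V * (∑ w, ζ w - 1) := by
    calc ∑ w, ζ w ≤ ∑ _ : V, (∑ w, ζ w - 1) := sum_le_sum fun x _ => by
          obtain ⟨u, v, huv, hx⟩ := h x
          exact hζ.le_sum_sub_one huv hx
      _ = Fintype.card V * (∑ w, ζ w - 1) := by rw [sum_const, card_univ, nsmul_eq_mul]
  rw [div_le_iff₀ (by linarith)]
  linarith

lemma one_lt_ldimf (hV : 1 < Fintype.card V)
    (h : ∀ x, ∃ u v, G.Adj u v ∧ G.dist x u = G.dist x v) : 1 < ldimf G := by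
  have hV' : (1 : ℝ) < Fintype.card V := by exact_mod_cast hV
  calc (1 : ℝ) < Fintype.card V / (Fintype.card V - 1) :=
        (one_lt_div (by linarith)).mpr (by linarith)
    _ ≤ ldimf G := card_div_card_sub_one_le_ldimf hV h

end LocalFractionalMetricDimension

/-- For a finite connected simple graph `G` of order `n > 2`, the local fractional metric
dimension of `G` equals `1` if and only if `G` is bipartite (i.e. `2`-colorable). -/
theorem ldimf_eq_one_iff_bipartite {V : Type*} [Fintype V] (G : SimpleGraph V)
    (hconn : G.Connected) (hcard : 2 < Fintype.card V) :
    ldimf G = 1 ↔ G.Colorable 2 := by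
  have hV : 1 < Fintype.card V := by omega
  have : Nontrivial V := Fintype.one_lt_card_iff_nontrivial.mp hV
  obtain ⟨v, huv⟩ := hconn.preconnected.exists_adj_of_nontrivial (Classical.arbitrary V)
  refine ⟨fun h => ?_, fun h2 => ?_⟩
  · by_contra h2
    exact (one_lt_ldimf hV (hconn.exists_adj_dist_eq_of_not_colorable_two h2)).ne' h
  · exact ldimf_eq_one_of_forall_dist_ne huv fun a b hab w =>
      (hconn w a).dist_ne_of_adj_of_colorable_two h2 hab
end

section
/- For every odd integer ℘ ≥ 5, the Toeplitz graph T_℘⟨{1, ℘−2}⟩ satisfies ldim_f(T_℘⟨{1, ℘−2}⟩) = 1. -/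
open Finset

def toeplitzGraph (n : ℕ) (S : Set ℕ) : SimpleGraph (Fin n) where
  Adj p q := p ≠ q ∧ Nat.dist (p : ℕ) (q : ℕ) ∈ S
  symm := ⟨fun p q ⟨h1, h2⟩ => ⟨h1.symm, by rwa [Nat.dist_comm]⟩⟩
  loopless := ⟨fun p ⟨h, _⟩ => h rfl⟩

/-!
Since `p` is odd, both `1` and `p - 2` are odd, so every edge of `T_p⟨{1, p-2}⟩` joins vertices of
opposite parity and the graph is bipartite; it is connected through the path `0 - 1 - ⋯ - (p-1)`.
In a connected bipartite graph the distances from any `w` to the two ends of an edge have different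
parities, so every vertex resolves every edge: a single vertex of weight `1` is a local resolving
function, while any local resolving function has total weight at least `1` as soon as there is an
edge.
-/

namespace SimpleGraph

variable {V : Type*} {G : SimpleGraph V}

theorem Coloring.dist_ne_dist_of_adj (c : G.Coloring Bool) (hconn : G.Connected) {u v : V}
    (huv : G.Adj u v) (w : V) : G.dist w u ≠ G.dist w v := by
  intro hdist
  obtain ⟨pu, hpu⟩ := (hconn w u).exists_walk_length_eq_dist
  obtain ⟨pv, hpv⟩ := (hconn w v).exists_walk_length_eq_dist
  have hu := c.even_length_iff_congr pu
  have hv := c.even_length_iff_congr pv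
  rw [hpu, hdist, ← hpv, hv] at hu
  exact c.valid huv (by revert hu; cases c w <;> cases c u <;> cases c v <;> simp)

end SimpleGraph

section LocalResolving

variable {V : Type*} [Fintype V] {G : SimpleGraph V} {ζ : V → ℝ}

theorem IsLocalResolvingFunction.one_le_sum_s3 (hζ : IsLocalResolvingFunction G ζ) {u v : V}
    (huv : G.Adj u v) : 1 ≤ ∑ w, ζ w :=
  (hζ.2 u v huv).trans <|
    sum_le_sum_of_subset_of_nonneg (filter_subset _ _) fun w _ _ => (hζ.1 w).1

theorem isLocalResolvingFunction_single [DecidableEq V] (w₀ : V)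
    (hres : ∀ u v, G.Adj u v → G.dist w₀ u ≠ G.dist w₀ v) :
    IsLocalResolvingFunction G (Pi.single w₀ 1) := by
  refine ⟨fun w => ?_, fun u v huv => ?_⟩
  · rcases eq_or_ne w w₀ with rfl | hw <;> simp [*]
  · rw [sum_pi_single', if_pos (by simpa using hres u v huv)]

theorem ldimf_eq_one_of_adj_of_forall_dist_ne {u v : V} (huv : G.Adj u v)
    (hres : ∀ w u v, G.Adj u v → G.dist w u ≠ G.dist w v) : ldimf G = 1 := by
  classical
  have hmem : (1 : ℝ) ∈ {s : ℝ | ∃ ζ : V → ℝ, IsLocalResolvingFunction G ζ ∧ s = ∑ v, ζ v} :=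
    ⟨Pi.single u 1, isLocalResolvingFunction_single u (hres u), by simp⟩
  have hlb : ∀ s ∈ {s : ℝ | ∃ ζ : V → ℝ, IsLocalResolvingFunction G ζ ∧ s = ∑ v, ζ v}, 1 ≤ s := by
    rintro s ⟨ζ, hζ, rfl⟩
    exact hζ.one_le_sum_s3 huv
  exact le_antisymm (csInf_le ⟨1, hlb⟩ hmem) (le_csInf ⟨1, hmem⟩ hlb)

theorem ldimf_eq_one_of_coloring (c : G.Coloring Bool) (hconn : G.Connected) {u v : V}
    (huv : G.Adj u v) : ldimf G = 1 :=
  ldimf_eq_one_of_adj_of_forall_dist_ne huv fun w _ _ h => c.dist_ne_dist_of_adj hconn h w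

end LocalResolving

namespace toeplitzGraph

variable {n : ℕ} {S : Set ℕ}

theorem adj_succ (hS : 1 ∈ S) {k : ℕ} (hk : k + 1 < n) :
    (toeplitzGraph n S).Adj ⟨k, by omega⟩ ⟨k + 1, hk⟩ :=
  ⟨by simp [Fin.ext_iff], by simpa [Nat.dist] using hS⟩

theorem connected [NeZero n] (hS : 1 ∈ S) : (toeplitzGraph n S).Connected := by
  have hreach : ∀ k (hk : k < n), (toeplitzGraph n S).Reachable 0 ⟨k, hk⟩ := by
    intro k
    induction k with
    | zero => intro _; rfl
    | succ k ih => exact fun hk => (ih (by omega)).trans (adj_succ hS hk).reachable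
  exact .mk fun a b => (hreach a a.2).symm.trans (hreach b b.2)

def parityColoring (hS : ∀ s ∈ S, Odd s) : (toeplitzGraph n S).Coloring Bool :=
  SimpleGraph.Coloring.mk (fun i => decide (Even (i : ℕ))) fun {a b} ⟨_, hab⟩ => by
    have hodd := Nat.odd_iff.1 (hS _ hab)
    simp only [Nat.dist, ne_eq, decide_eq_decide, Nat.even_iff] at hodd ⊢
    omega

end toeplitzGraph

/-- For every odd integer `℘ ≥ 5`, `ldimf(T_℘⟨{1, ℘-2}⟩) = 1`. -/
theorem ldimf_toeplitz_one_sub_two (p : ℕ) (hp : 5 ≤ p) (hodd : Odd p) :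
    ldimf (toeplitzGraph p {1, p - 2}) = 1 := by
  have : NeZero p := ⟨by omega⟩
  have hS : ∀ s ∈ ({1, p - 2} : Set ℕ), Odd s := by
    rintro s (rfl | rfl)
    · exact odd_one
    · exact Nat.Odd.sub_even (by omega) hodd even_two
  exact ldimf_eq_one_of_coloring (toeplitzGraph.parityColoring hS)
    (toeplitzGraph.connected (by simp)) (toeplitzGraph.adj_succ (k := 0) (by simp) (by omega))
end

section
/- Let p be a prime with p > 3 and let k ≥ 2 be an integer, and consider the graph G'(Z_{p^k}) whose vertices are the zero divisors of Z_{p^k}, two distinct vertices x and y being adjacent if and only if the product x·y mod p^k is not a unit of Z_{p^k}. Then ldim_f(G'(Z_{p^k})) = (p^{k−1} − 1)/2. -/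
open Finset

/-- The graph `G'(Z_n)`: vertices are the zero divisors of `Z_n`
(residues `x ≢ 0 (mod n)` with `gcd(x, n) > 1`), two distinct vertices `x, y` being
adjacent iff `x·y mod n` is not a unit of `Z_n`, i.e. `gcd(x·y, n) > 1`. -/
def zeroDivisorGraph' (n : ℕ) : SimpleGraph {x : Fin n // x.val ≠ 0 ∧ 1 < Nat.gcd x.val n} where
  Adj x y := x ≠ y ∧ 1 < Nat.gcd (x.1.val * y.1.val) n
  symm := ⟨fun x y ⟨h1, h2⟩ => ⟨h1.symm, by rwa [Nat.mul_comm]⟩⟩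
  loopless := ⟨fun x ⟨h, _⟩ => h rfl⟩

/-!
Every zero divisor of `ℤ/p^k` is a multiple of `p`, so any product of two of them is again a
non-unit and `G'(ℤ/p^k)` is the complete graph on its `p^(k-1) - 1` vertices. In a complete graph
the resolving neighborhood of an edge `uv` is just `{u, v}`, so a local resolving function is a
weighting with `ζ u + ζ v ≥ 1` for all `u ≠ v`; every vertex except possibly a minimiser of
`ζ` then weighs at least `1/2`, whence `∑ ζ ≥ n/2`, attained by the constant `1/2`.
-/

lemma isLocalResolvingFunction_top_iff {V : Type*} [Fintype V] {ζ : V → ℝ} :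
    IsLocalResolvingFunction (⊤ : SimpleGraph V) ζ ↔
      (∀ w, ζ w ∈ Set.Icc (0 : ℝ) 1) ∧ ∀ u v, u ≠ v → 1 ≤ ζ u + ζ v := by
  classical
  have hneighborhood : ∀ u v : V, u ≠ v →
      univ.filter (fun w => (⊤ : SimpleGraph V).dist w u ≠ (⊤ : SimpleGraph V).dist w v) =
        {u, v} := by
    intro u v huv
    ext w
    by_cases hwu : w = u <;> by_cases hwv : w = v <;> simp_all [SimpleGraph.dist_top]
  refine and_congr_right' (forall₂_congr fun u v => ?_)
  rw [SimpleGraph.top_adj]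
  exact imp_congr_right fun huv => by rw [hneighborhood u v huv, sum_pair huv]

lemma card_div_two_le_sum_of_forall_ne {V : Type*} [Fintype V] [Nontrivial V] (ζ : V → ℝ)
    (h : ∀ u v, u ≠ v → 1 ≤ ζ u + ζ v) :
    (Fintype.card V : ℝ) / 2 ≤ ∑ v, ζ v := by
  classical
  obtain ⟨m, hm⟩ := Finite.exists_min ζ
  obtain ⟨v, hvm⟩ := exists_ne m
  have hhalf : ∀ w, w ≠ m → 0 ≤ ζ w - 1 / 2 := fun w hw => by linarith [h w m hw, hm w]
  have hpair : 0 ≤ ∑ w ∈ {m, v}, (ζ w - 1 / 2) := by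
    rw [sum_pair hvm.symm]; linarith [h m v hvm.symm]
  have hrest : ∑ w ∈ {m, v}, (ζ w - 1 / 2) ≤ ∑ w, (ζ w - 1 / 2) :=
    sum_le_sum_of_subset_of_nonneg (subset_univ _) fun w _ hw =>
      hhalf w fun hwm => hw (by simp [hwm])
  have hsum : ∑ w, (ζ w - 1 / 2) = ∑ w, ζ w - Fintype.card V / 2 := by
    rw [sum_sub_distrib, sum_const, card_univ, nsmul_eq_mul]; ring
  linarith

lemma ldimf_top {V : Type*} [Fintype V] [Nontrivial V] :
    ldimf (⊤ : SimpleGraph V) = Fintype.card V / 2 := by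
  refine IsLeast.csInf_eq ⟨⟨fun _ => 1 / 2, ?_, ?_⟩, ?_⟩
  · exact isLocalResolvingFunction_top_iff.2 ⟨fun _ => by norm_num, fun _ _ _ => by norm_num⟩
  · rw [sum_const, card_univ, nsmul_eq_mul]; ring
  · rintro _ ⟨ζ, hζ, rfl⟩
    exact card_div_two_le_sum_of_forall_ne ζ (isLocalResolvingFunction_top_iff.1 hζ).2

lemma Nat.Prime.one_lt_gcd_pow_iff {p k a : ℕ} (hp : p.Prime) (hk : k ≠ 0) :
    1 < a.gcd (p ^ k) ↔ p ∣ a := by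
  have hpos : 0 < a.gcd (p ^ k) := Nat.gcd_pos_of_pos_right _ (pow_pos hp.pos k)
  rw [← not_iff_not, not_lt, Nat.le_one_iff_eq_zero_or_eq_one, or_iff_right hpos.ne',
    ← Nat.Coprime, Nat.coprime_pow_right_iff (Nat.pos_of_ne_zero hk), Nat.coprime_comm,
    hp.coprime_iff_not_dvd]

lemma zeroDivisorGraph'_prime_pow_eq_top {p k : ℕ} (hp : p.Prime) (hk : k ≠ 0) :
    zeroDivisorGraph' (p ^ k) = ⊤ := by
  ext x y
  refine and_iff_left_of_imp fun _ => (hp.one_lt_gcd_pow_iff hk).2 ?_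
  exact ((hp.one_lt_gcd_pow_iff hk).1 x.2.2).mul_right _

lemma Fin.card_subtype_val (n : ℕ) (P : ℕ → Prop) [DecidablePred P] :
    Fintype.card {x : Fin n // P x.val} = #{x ∈ range n | P x} := by
  rw [← Nat.Iio_eq_range, ← Fin.map_valEmbedding_univ, filter_map, card_map,
    Fintype.card_subtype]
  rfl

lemma card_zeroDivisors_prime_pow {p k : ℕ} (hp : p.Prime) (hk : k ≠ 0) :
    Fintype.card {x : Fin (p ^ k) // x.val ≠ 0 ∧ 1 < Nat.gcd x.val (p ^ k)} =
      p ^ (k - 1) - 1 := by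
  rw [Fintype.card_congr
      (Equiv.subtypeEquivRight fun x => and_congr_right' (hp.one_lt_gcd_pow_iff hk)),
    Fin.card_subtype_val _ fun x => x ≠ 0 ∧ p ∣ x,
    ← Nat.succ_pred_eq_of_pos (pow_pos hp.pos k),
    Nat.card_multiples', Nat.pred_eq_sub_one]
  have hpk : p ^ k = p ^ (k - 1) * p := by rw [← pow_succ, Nat.sub_add_cancel (by omega)]
  have hq : 1 ≤ p ^ (k - 1) := Nat.one_le_pow _ _ hp.pos
  have hp1 : 1 ≤ p := hp.one_le
  refine Nat.div_eq_of_lt_le ?_ ?_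
  · rw [Nat.sub_one_mul, hpk]; omega
  · rw [Nat.sub_add_cancel hq, hpk]; exact Nat.sub_one_lt (by positivity)

/-- For every prime `p > 3` and every integer `k ≥ 2`,
`ldimf(G'(Z_{p^k})) = (p^(k-1) - 1) / 2`. -/
theorem ldimf_zeroDivisorGraph'_p_pow_k (p k : ℕ) (hp : p.Prime) (h3 : 3 < p)
    (hk : 2 ≤ k) :
    ldimf (zeroDivisorGraph' (p ^ k)) = ((p : ℝ) ^ (k - 1) - 1) / 2 := by
  have hk0 : k ≠ 0 := by omega
  have hcard := card_zeroDivisors_prime_pow hp hk0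
  have hp_le : p ≤ p ^ (k - 1) := Nat.le_self_pow (by omega) p
  have : Nontrivial {x : Fin (p ^ k) // x.val ≠ 0 ∧ 1 < Nat.gcd x.val (p ^ k)} :=
    Fintype.one_lt_card_iff_nontrivial.1 (by omega)
  rw [zeroDivisorGraph'_prime_pow_eq_top hp hk0, ldimf_top, hcard,
    Nat.cast_sub (by omega), Nat.cast_pow, Nat.cast_one]
end
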